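/- For all parameters α, β and all n ≥ 0: Σ_{k=0}^{n} [(-n)_k (α+β+1)_k (α+k+1)_{n-k} (α+β+2k+1) / Γ(α+β+n+k+2)] · P_k^{(α,β)}(x) = (1/Γ(α+β+1)) · ((1-x)/2)^n. -/
import Mathlib


open Finset Real

/-- Pochhammer symbol (rising factorial) `(a)_k`. -/
noncomputable def poch (a : ℝ) (k : ℕ) : ℝ := (ascPochhammer ℝ k).eval a

/-- Classical Laguerre polynomial `L_n^{(α)}(x)` for arbitrary parameter α. -/
noncomputable def lag (α : ℝ) (n : ℕ) (x : ℝ) : ℝ :=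
  ∑ k ∈ Finset.range (n + 1),
    (-1 : ℝ) ^ k * (poch (α + k + 1) (n - k) / (Nat.factorial (n - k))) *
      x ^ k / (Nat.factorial k)

/-- Classical Jacobi polynomial `P_n^{(α,β)}(x)` for arbitrary parameters. -/
noncomputable def jac (α β : ℝ) (n : ℕ) (x : ℝ) : ℝ :=
  ∑ k ∈ Finset.range (n + 1),
    (poch ((n : ℝ) + α + β + 1) k / (Nat.factorial k)) *
      (poch (α + k + 1) (n - k) / (Nat.factorial (n - k))) * ((x - 1) / 2) ^ k

/-- Generalized binomial coefficient `C(x, k)`. -/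
noncomputable def genBinom (x : ℝ) (k : ℕ) : ℝ :=
  (∏ j ∈ Finset.range k, (x - j)) / (Nat.factorial k)

/-- Charlier polynomial `C_n^{(a)}(x)`. -/
noncomputable def charlier (a : ℝ) (n : ℕ) (x : ℝ) : ℝ :=
  ∑ k ∈ Finset.range (n + 1), genBinom x k * (-a) ^ (n - k) / (Nat.factorial (n - k))

/-- Reciprocal Gamma function. -/
noncomputable def iG (z : ℝ) : ℝ := 1 / Real.Gamma z

lemma poch_zero (a : ℝ) : poch a 0 = 1 := by simp [poch]

lemma poch_succ (a : ℝ) (k : ℕ) : poch a (k+1) = poch a k * (a + k) := by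
  simp [poch, ascPochhammer_succ_right]

lemma poch_succ_left (a : ℝ) (k : ℕ) : poch a (k+1) = a * poch (a+1) k := by
  simp [poch, ascPochhammer_succ_left, Polynomial.eval_comp]

lemma poch_add (a : ℝ) (m : ℕ) : ∀ n : ℕ, poch a (m + n) = poch a m * poch (a + m) n := by
  intro n
  induction n with
  | zero => simp [poch_zero]
  | succ n ih =>
      rw [show m + (n+1) = (m+n)+1 from rfl, poch_succ, ih, poch_succ]
      push_cast; ring

lemma poch_neg_self (n : ℕ) : poch (-(n:ℝ)) n = (-1)^n * n.factorial := by
  induction n with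
  | zero => simp [poch_zero]
  | succ n ih =>
      rw [poch_succ_left]
      rw [show (-(↑(n+1):ℝ)) + 1 = -(n:ℝ) by push_cast; ring, ih]
      rw [Nat.factorial_succ]
      push_cast; ring

lemma iG_succ (z : ℝ) : iG z = z * iG (z + 1) := by
  unfold iG
  rcases eq_or_ne (Real.Gamma z) 0 with h | h
  · rcases (Real.Gamma_eq_zero_iff z).1 h with ⟨m, rfl⟩
    cases m with
    | zero => simp [Real.Gamma_zero]
    | succ m =>
        rw [show (-(↑(m+1):ℝ)) + 1 = -(m:ℝ) by push_cast; ring]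
        rw [h, Real.Gamma_neg_nat_eq_zero]
        simp
  · have hz : z ≠ 0 := by rintro rfl; exact h Real.Gamma_zero
    rw [Real.Gamma_add_one hz]
    field_simp

lemma poch_iG (z : ℝ) : ∀ m : ℕ, iG z = poch z m * iG (z + m) := by
  intro m
  induction m with
  | zero => simp [poch_zero]
  | succ m ih =>
      rw [ih, iG_succ (z + m), poch_succ]
      rw [show z + (↑(m+1):ℝ) = (z + m) + 1 by push_cast; ring]
      ring

lemma core (a : ℝ) (N : ℕ) (hN : N ≠ 0) :
    ∑ m ∈ Finset.range (N+1),
      poch (-(N:ℝ)) m * poch a m * (a + 2*m) * iG (a + N + 1 + m) / (Nat.factorial m) = 0 := by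
  set V : ℕ → ℝ := fun m => -(m:ℝ) * poch (-(N:ℝ)) m * poch a m * iG (a + N + m) / (Nat.factorial m) with hV
  have key : ∀ m : ℕ, (N:ℝ) * (poch (-(N:ℝ)) m * poch a m * (a + 2*m) * iG (a + N + 1 + m) / (Nat.factorial m)) = V (m+1) - V m := by
    intro m
    have hm : ((Nat.factorial m : ℝ)) ≠ 0 := by exact_mod_cast m.factorial_ne_zero
    have hm1 : ((m:ℝ) + 1) ≠ 0 := by positivity
    simp only [hV, poch_succ, Nat.factorial_succ]
    push_cast
    rw [show a + (N:ℝ) + ((m:ℝ)+1) = (a + N + m) + 1 by ring,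
        show a + (N:ℝ) + 1 + m = (a + N + m) + 1 by ring,
        iG_succ (a + (N:ℝ) + m)]
    field_simp
    ring
  have tel : ∑ m ∈ Finset.range (N+1), (V (m+1) - V m) = V (N+1) - V 0 :=
    Finset.sum_range_sub V (N+1)
  have hV0 : V 0 = 0 := by simp [hV]
  have hVN : V (N+1) = 0 := by
    have h0 : poch (-(N:ℝ)) (N+1) = 0 := by
      rw [poch_succ]; simp
    simp [hV, h0]
  have hsum : (N:ℝ) * ∑ m ∈ Finset.range (N+1),
      poch (-(N:ℝ)) m * poch a m * (a + 2*m) * iG (a + N + 1 + m) / (Nat.factorial m) = 0 := by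
    rw [Finset.mul_sum]
    rw [Finset.sum_congr rfl fun m _ => key m, tel, hV0, hVN, sub_zero]
  have hNne : (N:ℝ) ≠ 0 := Nat.cast_ne_zero.2 hN
  exact (mul_eq_zero.1 hsum).resolve_left hNne

lemma tri (n : ℕ) (F : ℕ → ℕ → ℝ) :
    ∑ k ∈ Finset.range (n+1), ∑ i ∈ Finset.range (k+1), F k i
      = ∑ i ∈ Finset.range (n+1), ∑ k ∈ Finset.Ico i (n+1), F k i := by
  simp only [Finset.range_eq_Ico]
  exact (Finset.sum_Ico_Ico_comm 0 (n+1) fun i k => F k i).symm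

lemma zero_block (α β x : ℝ) (n j : ℕ) (hj : j < n) :
    ∑ k ∈ Finset.Ico j (n+1),
      poch (-(n : ℝ)) k * poch (α + β + 1) k * poch (α + k + 1) (n - k) *
          (α + β + 2 * k + 1) / Real.Gamma (α + β + n + k + 2) *
        (poch ((k : ℝ) + α + β + 1) j / (Nat.factorial j) *
          (poch (α + j + 1) (k - j) / (Nat.factorial (k - j))) * ((x - 1) / 2) ^ j) = 0 := by
  rw [Finset.sum_Ico_eq_sum_range, show n + 1 - j = (n - j) + 1 by omega]
  set N := n - j with hN
  have hNc : (N:ℝ) = (n:ℝ) - (j:ℝ) := by rw [hN, Nat.cast_sub hj.le]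
  have key : ∀ m ∈ Finset.range (N+1),
      poch (-(n : ℝ)) (j+m) * poch (α + β + 1) (j+m) * poch (α + ((j+m : ℕ) : ℝ) + 1) (n - (j+m)) *
          (α + β + 2 * ((j+m : ℕ) : ℝ) + 1) / Real.Gamma (α + β + n + ((j+m : ℕ) : ℝ) + 2) *
        (poch (((j+m : ℕ) : ℝ) + α + β + 1) j / (Nat.factorial j) *
          (poch (α + j + 1) ((j+m) - j) / (Nat.factorial ((j+m) - j))) * ((x - 1) / 2) ^ j)
      = (poch (-(n:ℝ)) j * poch (α+β+1) (2*j) * poch (α+(j:ℝ)+1) N * ((x-1)/2)^j / (Nat.factorial j)) *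
        (poch (-(N:ℝ)) m * poch (α+β+1+2*(j:ℝ)) m * (α+β+1+2*(j:ℝ) + 2*m) *
          iG (α+β+1+2*(j:ℝ) + N + 1 + m) / (Nat.factorial m)) := by
    intro m hm
    have hmN : m ≤ N := Nat.lt_succ_iff.mp (Finset.mem_range.mp hm)
    rw [show (j+m) - j = m by omega, show n - (j+m) = N - m by omega]
    push_cast
    have hG : ∀ X : ℝ, X / Real.Gamma (α + β + (n:ℝ) + ((j:ℝ) + (m:ℝ)) + 2)
        = X * iG (α+β+1+2*(j:ℝ) + (N:ℝ) + 1 + (m:ℝ)) := by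
      intro X
      rw [show α + β + (n:ℝ) + ((j:ℝ) + (m:ℝ)) + 2 = α+β+1+2*(j:ℝ) + (N:ℝ) + 1 + (m:ℝ) by
        rw [hNc]; ring]
      rw [iG, div_eq_mul_one_div]
    rw [hG]
    rw [poch_add (-(n:ℝ)) j m, show -(n:ℝ) + (j:ℝ) = -(N:ℝ) by rw [hNc]; ring]
    have h4 : poch (α+β+1) (j+m) * poch ((j:ℝ)+(m:ℝ)+α+β+1) j
        = poch (α+β+1) (2*j) * poch (α+β+1+2*(j:ℝ)) m := by
      rw [show (j:ℝ)+(m:ℝ)+α+β+1 = (α+β+1) + ((j+m : ℕ):ℝ) by push_cast; ring]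
      rw [← poch_add, show (j+m)+j = 2*j + m by omega, poch_add]
      rw [show (α+β+1) + ((2*j : ℕ):ℝ) = α+β+1+2*(j:ℝ) by push_cast; ring]
    have h5 : poch (α+(j:ℝ)+1) m * poch (α+((j:ℝ)+(m:ℝ))+1) (N-m) = poch (α+(j:ℝ)+1) N := by
      rw [show α+((j:ℝ)+(m:ℝ))+1 = (α+(j:ℝ)+1) + (m:ℝ) by ring]
      rw [← poch_add, Nat.add_sub_cancel' hmN]
    linear_combination
      (poch (-(n:ℝ)) j * poch (-(N:ℝ)) m * (α+β+2*((j:ℝ)+(m:ℝ))+1) *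
        iG (α+β+1+2*(j:ℝ) + (N:ℝ) + 1 + (m:ℝ)) * ((x-1)/2)^j /
        ((Nat.factorial j : ℝ) * (Nat.factorial m : ℝ))) *
        (poch (α+(j:ℝ)+1) m * poch (α+((j:ℝ)+(m:ℝ))+1) (N-m)) * h4 +
      (poch (-(n:ℝ)) j * poch (-(N:ℝ)) m * (α+β+2*((j:ℝ)+(m:ℝ))+1) *
        iG (α+β+1+2*(j:ℝ) + (N:ℝ) + 1 + (m:ℝ)) * ((x-1)/2)^j /
        ((Nat.factorial j : ℝ) * (Nat.factorial m : ℝ))) *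
        (poch (α+β+1) (2*j) * poch (α+β+1+2*(j:ℝ)) m) * h5
  refine Eq.trans (Finset.sum_congr rfl key) ?_
  rw [← Finset.mul_sum, core (α+β+1+2*(j:ℝ)) N (by omega), mul_zero]

lemma last_term (α β x : ℝ) (n : ℕ) :
    poch (-(n : ℝ)) n * poch (α + β + 1) n * poch (α + (n:ℝ) + 1) (n - n) *
          (α + β + 2 * (n:ℝ) + 1) / Real.Gamma (α + β + (n:ℝ) + (n:ℝ) + 2) *
        (poch ((n : ℝ) + α + β + 1) n / (Nat.factorial n) *
          (poch (α + (n:ℝ) + 1) (n - n) / (Nat.factorial (n - n))) * ((x - 1) / 2) ^ n)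
      = 1 / Real.Gamma (α + β + 1) * ((1 - x) / 2) ^ n := by
  have hfac : ((n.factorial : ℕ) : ℝ) ≠ 0 := by exact_mod_cast n.factorial_ne_zero
  simp only [Nat.sub_self, poch_zero, Nat.factorial_zero, Nat.cast_one, mul_one, div_one]
  have hcomb : poch (α+β+1) n * poch ((n:ℝ)+α+β+1) n * (α+β+2*(n:ℝ)+1)
      = poch (α+β+1) (2*n+1) := by
    rw [show (n:ℝ)+α+β+1 = (α+β+1)+(n:ℝ) by ring]
    rw [← poch_add]
    rw [show 2*n+1 = (n+n)+1 by omega, poch_succ]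
    push_cast; ring
  have hiG : 1 / Real.Gamma (α+β+1)
      = poch (α+β+1) (2*n+1) * (1 / Real.Gamma (α+β+(n:ℝ)+(n:ℝ)+2)) := by
    have h := poch_iG (α+β+1) (2*n+1)
    rw [show (α+β+1)+((2*n+1 : ℕ):ℝ) = α+β+(n:ℝ)+(n:ℝ)+2 by push_cast; ring] at h
    exact h
  rw [poch_neg_self]
  calc ((-1:ℝ)^n * (n.factorial:ℝ)) * poch (α + β + 1) n * (α + β + 2 * (n:ℝ) + 1) /
          Real.Gamma (α + β + (n:ℝ) + (n:ℝ) + 2) *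
        (poch ((n : ℝ) + α + β + 1) n / (Nat.factorial n) * ((x - 1) / 2) ^ n)
      = (-1:ℝ)^n * (poch (α+β+1) n * poch ((n:ℝ)+α+β+1) n * (α+β+2*(n:ℝ)+1)) *
          (1 / Real.Gamma (α+β+(n:ℝ)+(n:ℝ)+2)) * ((x-1)/2)^n *
          ((n.factorial:ℝ) / (n.factorial:ℝ)) := by ring
    _ = (-1:ℝ)^n * poch (α+β+1) (2*n+1) * (1 / Real.Gamma (α+β+(n:ℝ)+(n:ℝ)+2)) *
          ((x-1)/2)^n * 1 := by rw [hcomb, div_self hfac]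
    _ = 1 / Real.Gamma (α + β + 1) * ((1 - x) / 2) ^ n := by
          rw [hiG, show ((1-x)/2)^n = (-1:ℝ)^n * ((x-1)/2)^n by
            rw [show (1-x)/2 = -((x-1)/2) by ring, neg_pow]]
          ring

theorem stmt7 (α β : ℝ) (n : ℕ) (x : ℝ) :
    ∑ k ∈ Finset.range (n + 1),
        poch (-(n : ℝ)) k * poch (α + β + 1) k * poch (α + k + 1) (n - k) *
          (α + β + 2 * k + 1) / Real.Gamma (α + β + n + k + 2) * jac α β k x =
      1 / Real.Gamma (α + β + 1) * ((1 - x) / 2) ^ n := by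
  have step1 : ∑ k ∈ Finset.range (n + 1),
        poch (-(n : ℝ)) k * poch (α + β + 1) k * poch (α + k + 1) (n - k) *
          (α + β + 2 * k + 1) / Real.Gamma (α + β + n + k + 2) * jac α β k x
      = ∑ i ∈ Finset.range (n+1), ∑ k ∈ Finset.Ico i (n+1),
          poch (-(n : ℝ)) k * poch (α + β + 1) k * poch (α + k + 1) (n - k) *
            (α + β + 2 * k + 1) / Real.Gamma (α + β + n + k + 2) *
          (poch ((k : ℝ) + α + β + 1) i / (Nat.factorial i) *
            (poch (α + i + 1) (k - i) / (Nat.factorial (k - i))) * ((x - 1) / 2) ^ i) := by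
    simp only [jac, Finset.mul_sum]
    exact tri n (fun k i =>
      poch (-(n : ℝ)) k * poch (α + β + 1) k * poch (α + k + 1) (n - k) *
        (α + β + 2 * k + 1) / Real.Gamma (α + β + n + k + 2) *
      (poch ((k : ℝ) + α + β + 1) i / (Nat.factorial i) *
        (poch (α + i + 1) (k - i) / (Nat.factorial (k - i))) * ((x - 1) / 2) ^ i))
  rw [step1, Finset.sum_range_succ]
  have h0 : ∑ i ∈ Finset.range n, ∑ k ∈ Finset.Ico i (n+1),
        poch (-(n : ℝ)) k * poch (α + β + 1) k * poch (α + k + 1) (n - k) *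
          (α + β + 2 * k + 1) / Real.Gamma (α + β + n + k + 2) *
        (poch ((k : ℝ) + α + β + 1) i / (Nat.factorial i) *
          (poch (α + i + 1) (k - i) / (Nat.factorial (k - i))) * ((x - 1) / 2) ^ i) = 0 :=
    Finset.sum_eq_zero fun j hj => zero_block α β x n j (Finset.mem_range.mp hj)
  rw [h0, zero_add, Nat.Ico_succ_singleton, Finset.sum_singleton]
  exact last_term α β x n
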